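/- arXiv:2010.05060 — 4 statements merged into one kernel-verified Lean document; each statement's English description precedes it below -/
import Mathlib

section
/- Let $k \geq 1$ and define the sequence $f_0 = 1$, $f_t = \max\{0, f_{t-1} \cdot d_{t-1} - k\}$ for $t \geq 1$, where $d_0, d_1, d_2, \dots$ is a sequence of positive integers. Then for all $t \geq 1$, $f_t = \max\{0, \prod_{i=0}^{t-1} d_i - k(1 + \sum_{i=1}^{t-1} \prod_{j=i}^{t-1} d_j)\}$. -/
/-! Without the truncation at `0` the recursion `g (t + 1) = g t * d t - k` is affine, and unrolling
it from `g 1 = d 0 - k` (Horner's scheme) gives the closed form. The truncation commutes with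
the recursion: once the count drops to `0` it stays there, and so does the unclamped value, since
`d t ≥ 0` and `k ≥ 0` keep a nonpositive value nonpositive. -/

open Finset

theorem max_zero_max_zero_mul_sub {R : Type*} [Ring R] [LinearOrder R] [IsOrderedRing R]
    {a d k : R} (hd : 0 ≤ d) (hk : 0 ≤ k) :
    max 0 (max 0 a * d - k) = max 0 (a * d - k) := by
  rcases le_total 0 a with ha | ha
  · rw [max_eq_right ha]
  · have had : a * d ≤ 0 := mul_nonpos_of_nonpos_of_nonneg ha hd
    rw [max_eq_left ha, zero_mul, max_eq_left (sub_nonpos.mpr hk),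
      max_eq_left (sub_nonpos.mpr (had.trans hk))]

theorem sum_prod_Ico_succ_top {R : Type*} [CommSemiring R] (d : ℕ → R) {a t : ℕ} (h : a ≤ t) :
    ∑ i ∈ Ico a (t + 1), ∏ j ∈ Ico i (t + 1), d j =
      (∑ i ∈ Ico a t, ∏ j ∈ Ico i t, d j) * d t + d t := by
  rw [sum_Ico_succ_top h, Nat.Ico_succ_singleton, prod_singleton, sum_mul]
  congr 1
  refine sum_congr rfl fun i hi => ?_
  rw [prod_Ico_succ_top (mem_Ico.mp hi).2.le]

def unclampedBurning {R : Type*} [CommRing R] (k : R) (d : ℕ → R) (t : ℕ) : R :=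
  (∏ i ∈ range t, d i) - k * (1 + ∑ i ∈ Ico 1 t, ∏ j ∈ Ico i t, d j)

theorem unclampedBurning_one {R : Type*} [CommRing R] (k : R) (d : ℕ → R) :
    unclampedBurning k d 1 = d 0 - k := by
  simp [unclampedBurning]

theorem unclampedBurning_succ {R : Type*} [CommRing R] (k : R) (d : ℕ → R) {t : ℕ} (ht : 1 ≤ t) :
    unclampedBurning k d (t + 1) = unclampedBurning k d t * d t - k := by
  rw [unclampedBurning, unclampedBurning, prod_range_succ, sum_prod_Ico_succ_top d ht]
  ring

open Finset in
theorem firefighter_birth_sequence_closed_form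
    (k : ℤ) (hk : 1 ≤ k) (d : ℕ → ℤ) (hd : ∀ i, 0 < d i)
    (f : ℕ → ℤ) (hf0 : f 0 = 1)
    (hf : ∀ t, f (t + 1) = max 0 (f t * d t - k)) :
    ∀ t, 1 ≤ t →
      f t = max 0 ((∏ i ∈ range t, d i) -
        k * (1 + ∑ i ∈ Ico 1 t, ∏ j ∈ Ico i t, d j)) := by
  suffices ∀ t, 1 ≤ t → f t = max 0 (unclampedBurning k d t) from this
  intro t ht
  induction t, ht using Nat.le_induction with
  | base => rw [hf, hf0, one_mul, unclampedBurning_one]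
  | succ n hn ih =>
    rw [hf, ih, max_zero_max_zero_mul_sub (hd n).le (by linarith), unclampedBurning_succ k d hn]
end

section
/- Let $d_0, d_1, d_2, \dots$ be a sequence of positive integers and $k \geq 1$. Define $f_0 = 1$ and $f_t = \max\{0, f_{t-1} \cdot d_{t-1} - k\}$. Then there exists $t \geq 0$ with $f_{t+1} = 0$ if and only if there exists $t \geq 0$ such that $\prod_{i=0}^{t} d_i - k(1 + \sum_{i=1}^{t} \prod_{j=i}^{t} d_j) \leq 0$. -/
/-!
Until the fire dies out the truncation `max 0` is inactive, so `f` follows the unclamped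
recursion `u 0 = 1`, `u (t + 1) = u t * d t - k`, and unrolling that recursion gives
`u (t + 1) = ∏_{i ≤ t} d i - k (1 + ∑_{1 ≤ i ≤ t} ∏_{i ≤ j ≤ t} d j)`.
Hence `f` reaches `0` exactly when `u` becomes nonpositive.
-/

open Finset

section Clamped

variable {α : Type*} [LinearOrder α] [Zero α] {F : ℕ → α → α} {f u : ℕ → α}

theorem clamped_eq_of_forall_ne_zero (hf0 : f 0 = u 0)
    (hf : ∀ t, f (t + 1) = max 0 (F t (f t))) (hu : ∀ t, u (t + 1) = F t (u t))
    (hne : ∀ t, f (t + 1) ≠ 0) (t : ℕ) : f t = u t := by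
  induction t with
  | zero => exact hf0
  | succ t ih =>
    have hmax : max 0 (F t (f t)) ≠ 0 := hf t ▸ hne t
    rw [hf, hu, ← ih, max_eq_right (not_le.mp fun h => hmax (max_eq_left h)).le]

theorem clamped_eq_of_forall_pos (hf0 : f 0 = u 0)
    (hf : ∀ t, f (t + 1) = max 0 (F t (f t))) (hu : ∀ t, u (t + 1) = F t (u t))
    (hpos : ∀ t, 0 < u (t + 1)) (t : ℕ) : f t = u t := by
  induction t with
  | zero => exact hf0
  | succ t ih => rw [hf, ih, ← hu, max_eq_right (hpos t).le]

theorem exists_clamped_eq_zero_iff (hf0 : f 0 = u 0)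
    (hf : ∀ t, f (t + 1) = max 0 (F t (f t))) (hu : ∀ t, u (t + 1) = F t (u t)) :
    (∃ t, f (t + 1) = 0) ↔ ∃ t, u (t + 1) ≤ 0 := by
  rw [← not_iff_not]
  push Not
  constructor
  · intro hne t
    have hnonneg : 0 ≤ f (t + 1) := hf t ▸ le_max_left _ _
    rw [← clamped_eq_of_forall_ne_zero hf0 hf hu hne]
    exact lt_of_le_of_ne hnonneg (hne t).symm
  · intro hpos t
    rw [clamped_eq_of_forall_pos hf0 hf hu hpos]
    exact (hpos t).ne'

end Clamped

def unclampedFire (k : ℤ) (d : ℕ → ℤ) : ℕ → ℤ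
  | 0 => 1
  | t + 1 => unclampedFire k d t * d t - k

theorem unclampedFire_succ (k : ℤ) (d : ℕ → ℤ) (t : ℕ) :
    unclampedFire k d (t + 1) = (∏ i ∈ range (t + 1), d i) -
      k * (1 + ∑ i ∈ Ico 1 (t + 1), ∏ j ∈ Ico i (t + 1), d j) := by
  induction t with
  | zero => simp [unclampedFire]
  | succ t ih =>
    have hsuffix : ∑ i ∈ Ico 1 (t + 2), ∏ j ∈ Ico i (t + 2), d j =
        (∑ i ∈ Ico 1 (t + 1), ∏ j ∈ Ico i (t + 1), d j) * d (t + 1) + d (t + 1) := by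
      rw [sum_Ico_succ_top (by omega), sum_mul, Nat.Ico_succ_singleton, prod_singleton]
      congr 1
      exact sum_congr rfl fun i hi => prod_Ico_succ_top (by grind) d
    rw [unclampedFire, ih, prod_range_succ _ (t + 1), hsuffix]
    ring

open Finset in
theorem firefighter_birth_sequence_containable_iff_general
    (k : ℤ) (d : ℕ → ℤ)
    (f : ℕ → ℤ) (hf0 : f 0 = 1)
    (hf : ∀ t, f (t + 1) = max 0 (f t * d t - k)) :
    (∃ t : ℕ, f (t + 1) = 0) ↔
      ∃ t : ℕ, (∏ i ∈ range (t + 1), d i) -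
        k * (1 + ∑ i ∈ Ico 1 (t + 1), ∏ j ∈ Ico i (t + 1), d j) ≤ 0 := by
  simp_rw [← unclampedFire_succ]
  exact exists_clamped_eq_zero_iff (F := fun t x => x * d t - k) hf0 hf fun _ => rfl

open Finset in
theorem firefighter_birth_sequence_containable_iff
    (k : ℤ) (hk : 1 ≤ k) (d : ℕ → ℤ) (hd : ∀ i, 0 < d i)
    (f : ℕ → ℤ) (hf0 : f 0 = 1)
    (hf : ∀ t, f (t + 1) = max 0 (f t * d t - k)) :
    (∃ t : ℕ, f (t + 1) = 0) ↔
      ∃ t : ℕ, (∏ i ∈ range (t + 1), d i) -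
        k * (1 + ∑ i ∈ Ico 1 (t + 1), ∏ j ∈ Ico i (t + 1), d j) ≤ 0 :=
  firefighter_birth_sequence_containable_iff_general k d f hf0 hf
end

section
/- With the setup of componentwise recursion $\vec{f}_0 = \vec{1}$, $\vec{f}_t = \max\{\vec{0}, (\vec{f}_{t-1} \odot \vec{d}_{t-1}) - \vec{p}_t\}$: there exists $t \geq 0$ with $\vec{f}_{t+1} = \vec{0}$ if and only if there exists $t \geq 0$ such that $\bigodot_{i=0}^{t} \vec{d}_i - \sum_{i=1}^{t} \vec{p}_i \odot \bigodot_{j=i}^{t} \vec{d}_j - \vec{p}_{t+1} \leq \vec{0}$ (componentwise). -/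
/-!
Without the truncation at `0`, the recursion is affine in the previous value, so
`u (t + 1) = u t * d t - p (t + 1)` unrolls to the explicit alternating expression of the
statement. Since birth numbers and firefighter counts are nonnegative, once `u` becomes
nonpositive it stays so, hence truncating at every step is the same as truncating once:
`f t = max 0 (u t)`. Thus `f (t + 1) = 0` exactly when the explicit expression is `≤ 0`.
-/

open Finset

namespace Firefighter

variable {R : Type*}

def unclampedFire [Ring R] (d p : ℕ → R) : ℕ → R
  | 0 => 1
  | t + 1 => unclampedFire d p t * d t - p (t + 1)

theorem unclampedFire_succ [CommRing R] (d p : ℕ → R) (t : ℕ) :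
    unclampedFire d p (t + 1) =
      (∏ i ∈ range (t + 1), d i) - (∑ i ∈ Ico 1 (t + 1), p i * ∏ l ∈ Ico i (t + 1), d l) -
        p (t + 1) := by
  induction t with
  | zero => simp [unclampedFire]
  | succ t ih =>
    have hsum : ∑ i ∈ Ico 1 (t + 1), p i * ∏ l ∈ Ico i (t + 2), d l =
        (∑ i ∈ Ico 1 (t + 1), p i * ∏ l ∈ Ico i (t + 1), d l) * d (t + 1) := by
      rw [sum_mul]
      refine sum_congr rfl fun i hi => ?_
      rw [prod_Ico_succ_top (mem_Ico.mp hi).2.le, mul_assoc]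
    rw [unclampedFire, ih, prod_range_succ _ (t + 1), sum_Ico_succ_top (by omega : 1 ≤ t + 1), hsum,
      prod_Ico_succ_top le_rfl, Ico_self, prod_empty]
    ring

theorem max_zero_max_zero_mul_sub [CommRing R] [LinearOrder R] [IsOrderedRing R]
    {x d q : R} (hd : 0 ≤ d) (hq : 0 ≤ q) :
    max 0 (max 0 x * d - q) = max 0 (x * d - q) := by
  rcases le_total 0 x with hx | hx
  · rw [max_eq_right hx]
  · rw [max_eq_left hx, zero_mul, zero_sub, max_eq_left (neg_nonpos.mpr hq),
      max_eq_left (sub_nonpos_of_le ((mul_nonpos_of_nonpos_of_nonneg hx hd).trans hq))]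

theorem eq_max_zero_unclampedFire [CommRing R] [LinearOrder R] [IsOrderedRing R]
    {d p f : ℕ → R} (hd : ∀ t, 0 ≤ d t) (hp : ∀ t, 0 ≤ p t) (hf0 : f 0 = 1)
    (hf : ∀ t, f (t + 1) = max 0 (f t * d t - p (t + 1))) (t : ℕ) :
    f t = max 0 (unclampedFire d p t) := by
  induction t with
  | zero => rw [hf0, unclampedFire, max_eq_right zero_le_one]
  | succ t ih => rw [hf, ih, unclampedFire, max_zero_max_zero_mul_sub (hd t) (hp (t + 1))]

end Firefighter

open Finset in
theorem firefighter_birth_sequence_forest_containable_iff_general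
    (m : ℕ)
    (d : ℕ → Fin m → ℤ) (hd : ∀ t j, 0 < d t j)
    (p : ℕ → Fin m → ℤ) (hp : ∀ t j, 0 ≤ p t j)
    (f : ℕ → Fin m → ℤ) (hf0 : ∀ j, f 0 j = 1)
    (hf : ∀ t j, f (t + 1) j = max 0 (f t j * d t j - p (t + 1) j)) :
    (∃ t : ℕ, ∀ j, f (t + 1) j = 0) ↔
      ∃ t : ℕ, ∀ j,
        (∏ i ∈ range (t + 1), d i j) -
          (∑ i ∈ Ico 1 (t + 1), p i j * ∏ l ∈ Ico i (t + 1), d l j) -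
          p (t + 1) j ≤ 0 := by
  refine exists_congr fun t => forall_congr' fun j => ?_
  rw [Firefighter.eq_max_zero_unclampedFire (d := (d · j)) (p := (p · j)) (f := (f · j))
    (fun t => (hd t j).le) (fun t => hp t j) (hf0 j) (fun t => hf t j), max_eq_left_iff,
    Firefighter.unclampedFire_succ]

open Finset in
theorem firefighter_birth_sequence_forest_containable_iff
    (m : ℕ) (hm : 1 ≤ m)
    (d : ℕ → Fin m → ℤ) (hd : ∀ t j, 0 < d t j)
    (p : ℕ → Fin m → ℤ) (hp : ∀ t j, 0 ≤ p t j)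
    (f : ℕ → Fin m → ℤ) (hf0 : ∀ j, f 0 j = 1)
    (hf : ∀ t j, f (t + 1) j = max 0 (f t j * d t j - p (t + 1) j)) :
    (∃ t : ℕ, ∀ j, f (t + 1) j = 0) ↔
      ∃ t : ℕ, ∀ j,
        (∏ i ∈ range (t + 1), d i j) -
          (∑ i ∈ Ico 1 (t + 1), p i j * ∏ l ∈ Ico i (t + 1), d l j) -
          p (t + 1) j ≤ 0 :=
  firefighter_birth_sequence_forest_containable_iff_general m d hd p hp f hf0 hf
end

section
/- Consider the hexagonal grid embedded with vertices at coordinates $(i,j) \in \mathbb{Z}^2$ with $(i \bmod 2, j \bmod 6) \in \{(0,0),(0,2),(1,3),(1,5)\}$ (so that the origin $(0,0)$ is a vertex), where two vertices are adjacent iff they differ by $(0, \pm 2)$ with appropriate parity, or by $(\pm 1, \pm 1)$ forming hexagonal adjacency. Then the graph distance from the origin to a vertex $v = (i,j)$ equals $d$ if and only if $\max\{|2j - (d \bmod 2)|/3, |i| + |j + (d \bmod 2)|/3\} = d$. -/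
/-- A point `(i,j) ∈ ℤ²` is a vertex of the hexagonal grid in the paper's
coordinate system. -/
def HexVert (p : ℤ × ℤ) : Prop :=
  (p.1 % 2, p.2 % 6) ∈ ({(0, 0), (0, 2), (1, 3), (1, 5)} : Set (ℤ × ℤ))

/-- One-directional description of hexagonal adjacency: a vertex with
`j ≡ 0 (mod 3)` has neighbors `(i, j+2)`, `(i-1, j-1)`, `(i+1, j-1)`, and a
vertex with `j ≡ 2 (mod 3)` has neighbors `(i, j-2)`, `(i-1, j+1)`,
`(i+1, j+1)`. -/
def HexAdjRel (p q : ℤ × ℤ) : Prop :=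
  (p.2 % 3 = 0 ∧ (q = (p.1, p.2 + 2) ∨ q = (p.1 - 1, p.2 - 1) ∨ q = (p.1 + 1, p.2 - 1))) ∨
  (p.2 % 3 = 2 ∧ (q = (p.1, p.2 - 2) ∨ q = (p.1 - 1, p.2 + 1) ∨ q = (p.1 + 1, p.2 + 1)))

/-- The hexagonal grid as a simple graph on its vertex set. -/
def hexGraph : SimpleGraph {p : ℤ × ℤ // HexVert p} :=
  SimpleGraph.fromRel fun u v => HexAdjRel u.1 v.1

set_option maxHeartbeats 2000000

def D (i j : ℤ) : ℕ := max ((2*j - j % 3 / 2).natAbs / 3) (i.natAbs + (j + j % 3 / 2).natAbs / 3)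

lemma hexVert_iff (p : ℤ × ℤ) : HexVert p ↔
    (p.1 % 2 = 0 ∧ p.2 % 6 = 0) ∨ (p.1 % 2 = 0 ∧ p.2 % 6 = 2) ∨
    (p.1 % 2 = 1 ∧ p.2 % 6 = 3) ∨ (p.1 % 2 = 1 ∧ p.2 % 6 = 5) := by
  simp [HexVert, Prod.ext_iff]

lemma lip (p q : ℤ × ℤ) (h : HexAdjRel p q) :
    D q.1 q.2 ≤ D p.1 p.2 + 1 ∧ D p.1 p.2 ≤ D q.1 q.2 + 1 := by
  obtain ⟨i, j⟩ := p
  rcases h with ⟨h3, h | h | h⟩ | ⟨h3, h | h | h⟩ <;> subst h <;> unfold D <;> simp only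
  · rw [show (j+2) % 3 = 2 from by omega, h3]; omega
  · rw [show (j-1) % 3 = 2 from by omega, h3]; omega
  · rw [show (j-1) % 3 = 2 from by omega, h3]; omega
  · rw [show (j-2) % 3 = 0 from by omega, h3]; omega
  · rw [show (j+1) % 3 = 0 from by omega, h3]; omega
  · rw [show (j+1) % 3 = 0 from by omega, h3]; omega

lemma step (i j : ℤ) (h : HexVert (i, j)) (hD : D i j ≠ 0) :
    ∃ q : ℤ × ℤ, HexVert q ∧ HexAdjRel (i, j) q ∧ D q.1 q.2 + 1 = D i j := by
  rw [hexVert_iff] at h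
  simp only at h
  by_cases h3 : j % 3 = 0
  · by_cases hj : j < 0
    · refine ⟨(i, j+2), by rw [hexVert_iff]; omega, Or.inl ⟨h3, Or.inl rfl⟩, ?_⟩
      show D i (j+2) + 1 = D i j
      unfold D; rw [show (j+2) % 3 = 2 from by omega, h3]; omega
    · by_cases hi : 0 < i
      · refine ⟨(i-1, j-1), by rw [hexVert_iff]; omega, Or.inl ⟨h3, Or.inr (Or.inl rfl)⟩, ?_⟩
        show D (i-1) (j-1) + 1 = D i j
        unfold D at hD ⊢; rw [show (j-1) % 3 = 2 from by omega]; rw [h3] at hD ⊢; omega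
      · refine ⟨(i+1, j-1), by rw [hexVert_iff]; omega, Or.inl ⟨h3, Or.inr (Or.inr rfl)⟩, ?_⟩
        show D (i+1) (j-1) + 1 = D i j
        unfold D at hD ⊢; rw [show (j-1) % 3 = 2 from by omega]; rw [h3] at hD ⊢; omega
  · have h3' : j % 3 = 2 := by omega
    by_cases hj : 0 < j
    · refine ⟨(i, j-2), by rw [hexVert_iff]; omega, Or.inr ⟨h3', Or.inl rfl⟩, ?_⟩
      show D i (j-2) + 1 = D i j
      unfold D; rw [show (j-2) % 3 = 0 from by omega, h3']; omega
    · by_cases hi : 0 < i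
      · refine ⟨(i-1, j+1), by rw [hexVert_iff]; omega, Or.inr ⟨h3', Or.inr (Or.inl rfl)⟩, ?_⟩
        show D (i-1) (j+1) + 1 = D i j
        unfold D at hD ⊢; rw [show (j+1) % 3 = 0 from by omega]; rw [h3'] at hD ⊢; omega
      · refine ⟨(i+1, j+1), by rw [hexVert_iff]; omega, Or.inr ⟨h3', Or.inr (Or.inr rfl)⟩, ?_⟩
        show D (i+1) (j+1) + 1 = D i j
        unfold D at hD ⊢; rw [show (j+1) % 3 = 0 from by omega]; rw [h3'] at hD ⊢; omega

lemma walk_le {u v : {p : ℤ × ℤ // HexVert p}} (w : hexGraph.Walk u v) :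
    D v.1.1 v.1.2 ≤ D u.1.1 u.1.2 + w.length := by
  induction w with
  | nil => simp
  | @cons a b c h w ih =>
    rw [hexGraph, SimpleGraph.fromRel_adj] at h
    rcases h.2 with hr | hr
    · have := lip _ _ hr
      simp only [SimpleGraph.Walk.length_cons]
      omega
    · have := lip _ _ hr
      simp only [SimpleGraph.Walk.length_cons]
      omega

lemma exists_walk_to_O (hO : HexVert (0,0)) :
    ∀ (n : ℕ) (v : {p : ℤ × ℤ // HexVert p}), D v.1.1 v.1.2 = n →
      ∃ w : hexGraph.Walk v ⟨(0,0), hO⟩, w.length = n := by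
  intro n
  induction n with
  | zero =>
    intro v hv
    have hv' := v.2
    rw [hexVert_iff] at hv'
    have h1 : v.1.1 = 0 ∧ v.1.2 = 0 := by unfold D at hv; omega
    have : v = ⟨(0,0), hO⟩ := Subtype.ext (Prod.ext h1.1 h1.2)
    subst this
    exact ⟨SimpleGraph.Walk.nil, rfl⟩
  | succ n ih =>
    rintro ⟨⟨i, j⟩, hvert⟩ hv
    simp only at hv
    obtain ⟨q, hq, hadj, hDq⟩ := step i j hvert (by omega)
    have hne : (⟨(i, j), hvert⟩ : {p : ℤ × ℤ // HexVert p}) ≠ ⟨q, hq⟩ := by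
      intro he
      have h' : (i, j) = q := congrArg Subtype.val he
      subst h'
      simp only at hDq
      omega
    have hA : hexGraph.Adj ⟨(i, j), hvert⟩ ⟨q, hq⟩ := by
      rw [hexGraph, SimpleGraph.fromRel_adj]
      exact ⟨hne, Or.inl hadj⟩
    obtain ⟨w, hw⟩ := ih ⟨q, hq⟩ (show D q.1 q.2 = n by omega)
    exact ⟨SimpleGraph.Walk.cons hA w, by simp [hw]⟩

lemma dist_eq_D (hO : HexVert (0,0)) (v : {p : ℤ × ℤ // HexVert p}) :
    hexGraph.dist ⟨(0,0), hO⟩ v = D v.1.1 v.1.2 := by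
  obtain ⟨w, hw⟩ := exists_walk_to_O hO (D v.1.1 v.1.2) v rfl
  have hub : hexGraph.dist ⟨(0,0), hO⟩ v ≤ D v.1.1 v.1.2 := by
    have := SimpleGraph.dist_le w.reverse
    simpa [hw] using this.trans_eq (by simp [hw])
  have hreach : hexGraph.Reachable ⟨(0,0), hO⟩ v := ⟨w.reverse⟩
  obtain ⟨w', hw'⟩ := hreach.exists_walk_length_eq_dist
  have hlb := walk_le w'
  have hO0 : D 0 0 = 0 := by decide
  simp only at hlb
  omega

lemma D_parity (i j : ℤ) (h : HexVert (i, j)) : (D i j : ℤ) % 2 = j % 3 / 2 := by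
  rw [hexVert_iff] at h
  unfold D
  omega

lemma cast_div3 (a : ℤ) (ha : 3 ∣ a) : ((a.natAbs / 3 : ℕ) : ℚ) = |(a : ℚ)| / 3 := by
  have h3 : (3 : ℕ) ∣ a.natAbs := by omega
  rw [Nat.cast_div h3 (by norm_num), Nat.cast_natAbs]
  norm_num

theorem hex_grid_distance_formula
    (hO : HexVert (0, 0)) (v : {p : ℤ × ℤ // HexVert p}) (d : ℕ) :
    hexGraph.dist ⟨(0, 0), hO⟩ v = d ↔
      max (|2 * (v.1.2 : ℚ) - (d % 2 : ℕ)| / 3)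
          (|(v.1.1 : ℚ)| + |(v.1.2 : ℚ) + (d % 2 : ℕ)| / 3) = d := by
  obtain ⟨⟨i, j⟩, hv⟩ := v
  simp only
  rw [dist_eq_D hO ⟨(i, j), hv⟩]
  simp only
  have hv' := hv
  rw [hexVert_iff] at hv'
  simp only at hv'
  set ε : ℤ := j % 3 / 2 with hε
  have hpar : (D i j : ℤ) % 2 = ε := D_parity i j hv
  have hd1 : (3 : ℤ) ∣ (2 * j - ε) := by omega
  have hd2 : (3 : ℤ) ∣ (j + ε) := by omega
  have key : max (|2 * (j : ℚ) - (ε : ℚ)| / 3) (|(i : ℚ)| + |(j : ℚ) + (ε : ℚ)| / 3)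
      = ((D i j : ℕ) : ℚ) := by
    unfold D
    rw [← hε, Nat.cast_max, Nat.cast_add, cast_div3 _ hd1, cast_div3 _ hd2, Nat.cast_natAbs]
    push_cast
    ring_nf
  constructor
  · intro h
    have hpd : ((d % 2 : ℕ) : ℤ) = ε := by omega
    have hq : ((d % 2 : ℕ) : ℚ) = (ε : ℚ) := by
      have := congrArg (fun z : ℤ => (z : ℚ)) hpd
      push_cast at this
      exact this
    rw [hq, key, h]
  · intro h
    by_cases hpd : ((d % 2 : ℕ) : ℤ) = ε
    · have hq : ((d % 2 : ℕ) : ℚ) = (ε : ℚ) := by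
        have := congrArg (fun z : ℤ => (z : ℚ)) hpd
        push_cast at this
        exact this
      rw [hq, key] at h
      exact_mod_cast h
    · exfalso
      set m : ℕ := d % 2 with hm
      have hA : (((2 * j - (m : ℤ)).natAbs : ℕ) : ℚ) = |2 * (j : ℚ) - (m : ℚ)| := by
        rw [Nat.cast_natAbs]
        push_cast
        ring_nf
      have hB : (((j + (m : ℤ)).natAbs : ℕ) : ℚ) = |(j : ℚ) + (m : ℚ)| := by
        rw [Nat.cast_natAbs]
        push_cast
        ring_nf
      rcases max_choice (|2 * (j : ℚ) - (m : ℚ)| / 3) (|(i : ℚ)| + |(j : ℚ) + (m : ℚ)| / 3)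
        with hc | hc <;> rw [hc] at h
      · have h' : (((2 * j - (m : ℤ)).natAbs : ℕ) : ℚ) = ((3 * d : ℕ) : ℚ) := by
          rw [hA]; push_cast; linarith
        have h'' : (2 * j - (m : ℤ)).natAbs = 3 * d := by exact_mod_cast h'
        omega
      · have h' : ((3 * i.natAbs + (j + (m : ℤ)).natAbs : ℕ) : ℚ) = ((3 * d : ℕ) : ℚ) := by
          push_cast [Int.cast_abs]
          rw [hB, Nat.cast_natAbs, Int.cast_abs]
          linarith
        have h'' : 3 * i.natAbs + (j + (m : ℤ)).natAbs = 3 * d := by exact_mod_cast h'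
        omega
end
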